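/- Let ρ be a critical radius function on ℝ^d, let p ≥ 1, let φ be a Young function which is strictly increasing on [0,∞) with φ(t) → ∞ as t → ∞, and let f be a measurable function on ℝ^d. Then the following are equivalent: (i) there exists θ ≥ 0 such that for every x₀ ∈ ℝ^d, ∫_{ℝ^d} |f|^p M_φ^θ(χ_{B(x₀,ρ(x₀))}) < ∞; (ii) there exists σ > 0 such that ∫_{ℝ^d} |f(x)|^p (1+|x|)^{−σ} dx < ∞. -/

import Mathlib

open MeasureTheory Metric Set
open scoped ENNReal NNReal

noncomputable section

/-- Euclidean space ℝ^d. -/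
abbrev Euc (d : ℕ) := EuclideanSpace ℝ (Fin d)

/-- A Young function: continuous, convex, increasing, vanishing at 0, nonnegative on `[0,∞)`. -/
structure IsYoung (A : ℝ → ℝ) : Prop where
  continuous : ContinuousOn A (Ici 0)
  convex : ConvexOn ℝ (Ici 0) A
  mono : MonotoneOn A (Ici 0)
  zero : A 0 = 0
  nonneg : ∀ t, 0 ≤ t → 0 ≤ A t

/-- The Luxemburg average `‖f‖_{A,B(c,r)}`. -/
def luxAvg {d : ℕ} (A : ℝ → ℝ) (f : Euc d → ℝ) (c : Euc d) (r : ℝ) : ℝ :=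
  sInf {lam : ℝ | 0 < lam ∧
    (∫ t in ball c r, A (|f t| / lam)) ≤ (volume (ball c r)).toReal}

/-- The Orlicz maximal operator `M_A`. -/
def orliczMax {d : ℕ} (A : ℝ → ℝ) (f : Euc d → ℝ) (x : Euc d) : ℝ≥0∞ :=
  ⨆ (c : Euc d) (r : ℝ) (_ : x ∈ ball c r), ENNReal.ofReal (luxAvg A f c r)

/-- The local Orlicz maximal operator `M_A^{loc}` (over sub-critical balls). -/
def orliczMaxLoc {d : ℕ} (ρ : Euc d → ℝ) (A : ℝ → ℝ) (f : Euc d → ℝ) (x : Euc d) : ℝ≥0∞ :=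
  ⨆ (c : Euc d) (r : ℝ) (_ : x ∈ ball c r ∧ r ≤ ρ c), ENNReal.ofReal (luxAvg A f c r)

/-- The maximal operator `M_A^θ`. -/
def orliczMaxTheta {d : ℕ} (ρ : Euc d → ℝ) (θ : ℝ) (A : ℝ → ℝ) (f : Euc d → ℝ)
    (x : Euc d) : ℝ≥0∞ :=
  ⨆ (c : Euc d) (r : ℝ) (_ : x ∈ ball c r),
    ENNReal.ofReal ((1 + r / ρ c) ^ (-θ) * luxAvg A f c r)

/-- The maximal operator `M_r^θ` of `r`-power averages. -/
def powMaxTheta {d : ℕ} (ρ : Euc d → ℝ) (r θ : ℝ) (w : Euc d → ℝ) (x : Euc d) : ℝ≥0∞ :=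
  ⨆ (c : Euc d) (s : ℝ) (_ : x ∈ ball c s),
    ENNReal.ofReal ((1 + s / ρ c) ^ (-θ) *
      ((∫ y in ball c s, w y ^ r) / (volume (ball c s)).toReal) ^ (1 / r))

/-- The maximal operator `M^θ` of plain averages. -/
def avgMaxTheta {d : ℕ} (ρ : Euc d → ℝ) (θ : ℝ) (w : Euc d → ℝ) (x : Euc d) : ℝ≥0∞ :=
  ⨆ (c : Euc d) (s : ℝ) (_ : x ∈ ball c s),
    ENNReal.ofReal ((1 + s / ρ c) ^ (-θ) *
      ((∫ y in ball c s, w y) / (volume (ball c s)).toReal))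

/-- The class `D_p` of Young functions: `∫_c^∞ (t/A(t))^{p'-1} dt/t < ∞` for some `c > 0`,
where `p' = p/(p-1)`. -/
def InDp (A : ℝ → ℝ) (p : ℝ) : Prop :=
  ∃ c > (0:ℝ), IntegrableOn (fun t => (t / A t) ^ (p / (p - 1) - 1) / t) (Ici c)

/-- A weight: a nonnegative locally integrable function. -/
def IsWeight {d : ℕ} (w : Euc d → ℝ) : Prop :=
  (∀ x, 0 ≤ w x) ∧ LocallyIntegrable w volume

/-- Bounded measurable functions with compact support. -/
def BddCompSupp {d : ℕ} (f : Euc d → ℝ) : Prop :=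
  Measurable f ∧ (∃ M, ∀ x, |f x| ≤ M) ∧ HasCompactSupport f

/-- A Calderón–Zygmund operator with kernel `K`. -/
structure IsCZO (d : ℕ) (T : (Euc d → ℝ) → Euc d → ℝ) (K : Euc d → Euc d → ℝ) : Prop where
  add : ∀ f g, T (f + g) = T f + T g
  smul : ∀ (a : ℝ) (f), T (a • f) = a • T f
  l2bdd : ∃ C > (0:ℝ), ∀ f : Euc d → ℝ, MemLp f 2 volume →
    MemLp (T f) 2 volume ∧ eLpNorm (T f) 2 volume ≤ ENNReal.ofReal C * eLpNorm f 2 volume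
  meas_kernel : Measurable (Function.uncurry K)
  repr : ∀ f, BddCompSupp f →
    ∀ᵐ x ∂volume, x ∉ tsupport f → T f x = ∫ y, K x y * f y
  kernel_bounds : ∃ C > (0:ℝ), ∃ δ₀ : ℝ, 0 < δ₀ ∧ δ₀ ≤ 1 ∧
    (∀ x y, x ≠ y → |K x y| ≤ C * dist x y ^ (-(d : ℝ))) ∧
    (∀ x x' y, x ≠ y → x' ≠ y → 2 * dist x x' ≤ dist x y →
      |K x y - K x' y| + |K y x - K y x'| ≤
        C * dist x x' ^ δ₀ * dist x y ^ (-(d : ℝ) - δ₀))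

/-- A critical radius function with constants `C₀`, `N₀`. -/
def IsCriticalRadius {d : ℕ} (ρ : Euc d → ℝ) (C₀ N₀ : ℝ) : Prop :=
  0 < C₀ ∧ 1 ≤ N₀ ∧ (∀ x, 0 < ρ x) ∧
  ∀ x y : Euc d,
    C₀⁻¹ * ρ x * (1 + dist x y / ρ x) ^ (-N₀) ≤ ρ y ∧
    ρ y ≤ C₀ * ρ x * (1 + dist x y / ρ x) ^ (N₀ / (N₀ + 1))

/-- The annulus `{x : R < |x - x₀| < 2R}`. -/
def annulus {d : ℕ} (x₀ : Euc d) (R : ℝ) : Set (Euc d) :=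
  {x | R < dist x x₀ ∧ dist x x₀ < 2 * R}

/-- Condition `(a_s)`. -/
def CondAs {d : ℕ} (ρ : Euc d → ℝ) (s : ℝ) (K : Euc d → Euc d → ℝ) : Prop :=
  ∀ N > (0:ℝ), ∃ C > (0:ℝ), ∀ (x₀ y : Euc d) (R : ℝ), 0 < R → dist y x₀ < R / 2 →
    (∫ x in annulus x₀ R, |K x y| ^ s) ^ (1 / s) ≤
      C * R ^ (-((d : ℝ) / (s / (s - 1)))) * (1 + R / ρ x₀) ^ (-N)

/-- Condition `(a'_s)`. -/
def CondAs' {d : ℕ} (ρ : Euc d → ℝ) (s : ℝ) (K : Euc d → Euc d → ℝ) : Prop :=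
  ∀ N > (0:ℝ), ∃ C > (0:ℝ), ∀ (x₀ y : Euc d) (R : ℝ), 0 < R →
    R < dist y x₀ → dist y x₀ < 2 * R →
    (∫ x in ball x₀ (R / 2), |K x y| ^ s) ^ (1 / s) ≤
      C * R ^ (-((d : ℝ) / (s / (s - 1)))) * (1 + R / ρ x₀) ^ (-N)

/-- Condition `(b_s)` for the kernel `Q` (typically `Q = K - K₀`). -/
def CondBs {d : ℕ} (ρ : Euc d → ℝ) (s : ℝ) (Q : Euc d → Euc d → ℝ) : Prop :=
  ∃ C > (0:ℝ), ∃ δ > (0:ℝ), ∀ (x₀ y : Euc d) (R : ℝ), 0 < R → R ≤ ρ x₀ →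
    dist y x₀ < R / 2 →
    (∫ x in annulus x₀ R, |Q x y| ^ s) ^ (1 / s) ≤
      C * R ^ (-((d : ℝ) / (s / (s - 1)))) * (R / ρ x₀) ^ δ

/-- Condition `(b'_s)` for the kernel `Q`. -/
def CondBs' {d : ℕ} (ρ : Euc d → ℝ) (s : ℝ) (Q : Euc d → Euc d → ℝ) : Prop :=
  ∃ C > (0:ℝ), ∃ ε > (0:ℝ), ∀ (x₀ y : Euc d) (R : ℝ), 0 < R → R ≤ ρ x₀ →
    R < dist y x₀ → dist y x₀ < 2 * R →
    (∫ x in ball x₀ (R / 2), |Q x y| ^ s) ^ (1 / s) ≤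
      C * R ^ (-((d : ℝ) / (s / (s - 1)))) * (R / ρ x₀) ^ ε

/-- Condition `(c_s)`. -/
def CondCs {d : ℕ} (ρ : Euc d → ℝ) (s : ℝ) (K : Euc d → Euc d → ℝ) : Prop :=
  ∃ δ > (0:ℝ), ∀ N > (0:ℝ), ∃ C > (0:ℝ), ∀ (x₀ y : Euc d) (R : ℝ), 0 < R →
    dist y x₀ < R / 2 →
    (∫ x in annulus x₀ R, |K x y| ^ s) ^ (1 / s) ≤
      C * R ^ (-((d : ℝ) / (s / (s - 1)))) * (1 + ρ x₀ / R) ^ (-δ) * (1 + R / ρ x₀) ^ (-N)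

/-- Pointwise size condition `(a_∞)`. -/
def CondAinfty {d : ℕ} (ρ : Euc d → ℝ) (K : Euc d → Euc d → ℝ) : Prop :=
  ∀ N > (0:ℝ), ∃ C > (0:ℝ), ∀ x y : Euc d, x ≠ y →
    |K x y| ≤ C * dist x y ^ (-(d : ℝ)) * (1 + dist x y / ρ x) ^ (-N)

/-- Pointwise comparison condition `(b_∞)` for `Q = K - K₀`. -/
def CondBinfty {d : ℕ} (ρ : Euc d → ℝ) (Q : Euc d → Euc d → ℝ) : Prop :=
  ∃ C > (0:ℝ), ∃ δ > (0:ℝ), ∀ x y : Euc d, x ≠ y →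
    |Q x y| ≤ C * dist x y ^ (-(d : ℝ)) * (dist x y / ρ y) ^ δ

/-!
Let `χ` be the indicator of `B(x₀, ρ(x₀))`; the point is that `M_φ^θ χ(x)` is comparable to a
negative power of `1 + |x|`.

From below: the ball `B(0, ρ(0) + 1 + |x|)` contains both `x` and `B(0, ρ(0))`, and convexity of
`φ` bounds the Luxemburg average of `χ` over it below by `min(1, φ(1))` times the volume ratio, so
`M_φ^θ χ(x) ≳ (1 + |x|)^{-(θ + d)}`.

From above: the Luxemburg averages of `χ` are at most `1 + φ(1)` and vanish on balls missing
`B(x₀, ρ(x₀))`. For a ball `B(c, r)` meeting it, the upper growth bound of `ρ` gives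
`ρ(c) ≲ ρ(x₀) s^{N₀/(N₀+1)}` with `s = 1 + r/ρ(x₀)`, hence
`(1 + r/ρ(c))^{-θ} ≲ s^{-θ/(N₀+1)}`, while `x ∈ B(c, r)` forces `1 + |x| ≲ s`. With
`θ = σ(N₀ + 1)` this gives `M_φ^θ χ(x) ≲ (1 + |x|)^{-σ}`.
-/

theorem ConvexOn.div_le_div_of_map_zero {φ : ℝ → ℝ} (hφ : ConvexOn ℝ (Ici 0) φ) (h0 : φ 0 = 0)
    {s t : ℝ} (hs : 0 < s) (hst : s ≤ t) : φ s / s ≤ φ t / t := by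
  have ht : 0 < t := hs.trans_le hst
  simpa [h0] using hφ.secant_mono (mem_Ici.2 le_rfl) hs.le ht.le hs.ne' ht.ne' hst

theorem measure_ball_toReal_div_measure_ball {E : Type*} [NormedAddCommGroup E]
    [NormedSpace ℝ E] [MeasurableSpace E] [BorelSpace E] [FiniteDimensional ℝ E]
    (μ : Measure E) [μ.IsAddHaarMeasure] (x y : E) {a b : ℝ} (ha : 0 < a) (hb : 0 < b) :
    (μ (ball x a)).toReal / (μ (ball y b)).toReal = (a / b) ^ Module.finrank ℝ E := by
  have hunit : (μ (ball (0 : E) 1)).toReal ≠ 0 :=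
    (ENNReal.toReal_pos (measure_ball_pos μ 0 one_pos).ne' measure_ball_lt_top.ne).ne'
  rw [μ.addHaar_ball_of_pos x ha, μ.addHaar_ball_of_pos y hb, ENNReal.toReal_mul,
    ENNReal.toReal_mul, ENNReal.toReal_ofReal (by positivity),
    ENNReal.toReal_ofReal (by positivity), mul_div_mul_right _ _ hunit, div_pow]

theorem abs_indicator_one_le_one {α : Type*} (s : Set α) (t : α) :
    |s.indicator (fun _ => (1 : ℝ)) t| ≤ 1 := by
  by_cases ht : t ∈ s <;> simp [ht]

section LuxemburgAverage

variable {d : ℕ} {φ : ℝ → ℝ} {f : Euc d → ℝ} {c : Euc d} {r : ℝ}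

theorem luxAvg_nonneg : 0 ≤ luxAvg φ f c r :=
  Real.sInf_nonneg fun _ h => h.1.le

theorem one_add_mem_luxAvg_set (hφ : IsYoung φ) (hf : ∀ t, |f t| ≤ 1) :
    1 + φ 1 ∈ {lam : ℝ | 0 < lam ∧
      (∫ t in ball c r, φ (|f t| / lam)) ≤ (volume (ball c r)).toReal} := by
  have hlam : 0 < 1 + φ 1 := by linarith [hφ.nonneg 1 zero_le_one]
  have hbound : ∀ t, φ (|f t| / (1 + φ 1)) ≤ 1 := fun t => calc
    φ (|f t| / (1 + φ 1)) ≤ φ (1 / (1 + φ 1)) :=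
      hφ.mono (mem_Ici.2 (by positivity)) (mem_Ici.2 (by positivity)) (by gcongr; exact hf t)
    _ ≤ 1 / (1 + φ 1) * φ 1 := by
      have := hφ.convex.div_le_div_of_map_zero hφ.zero (by positivity : 0 < 1 / (1 + φ 1))
        (div_le_one_of_le₀ (by linarith [hφ.nonneg 1 zero_le_one]) hlam.le)
      rwa [div_one, div_le_iff₀ (by positivity), mul_comm] at this
    _ ≤ 1 := by
      rw [one_div, inv_mul_le_iff₀ hlam]; linarith
  refine ⟨hlam, ?_⟩
  calc (∫ t in ball c r, φ (|f t| / (1 + φ 1))) ≤ ∫ _ in ball c r, (1 : ℝ) :=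
        integral_mono_of_nonneg (ae_of_all _ fun t => hφ.nonneg _ (by positivity))
          (integrableOn_const measure_ball_lt_top.ne) (ae_of_all _ hbound)
    _ = (volume (ball c r)).toReal := by simp [measureReal_def]

theorem luxAvg_le_one_add (hφ : IsYoung φ) (hf : ∀ t, |f t| ≤ 1) : luxAvg φ f c r ≤ 1 + φ 1 :=
  csInf_le ⟨0, fun _ h => h.1.le⟩ (one_add_mem_luxAvg_set hφ hf)

theorem luxAvg_eq_zero_of_eqOn_zero (h0 : φ 0 = 0) (hf : EqOn f 0 (ball c r)) :
    luxAvg φ f c r = 0 := by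
  have hset : {lam : ℝ | 0 < lam ∧
      (∫ t in ball c r, φ (|f t| / lam)) ≤ (volume (ball c r)).toReal} = Ioi 0 := by
    ext lam
    refine ⟨fun h => h.1, fun h => ⟨h, ?_⟩⟩
    rw [setIntegral_congr_fun (g := fun _ => (0 : ℝ)) measurableSet_ball
      fun t ht => by simp [hf ht, h0], integral_zero]
    exact ENNReal.toReal_nonneg
  rw [luxAvg, hset, csInf_Ioi]

theorem integral_ball_comp_indicator_one {s : Set (Euc d)} (hs : MeasurableSet s) (h0 : φ 0 = 0)
    (lam : ℝ) :
    (∫ t in ball c r, φ (|s.indicator (fun _ => (1 : ℝ)) t| / lam)) =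
      φ (1 / lam) * (volume (ball c r ∩ s)).toReal := by
  have hfun : (fun t => φ (|s.indicator (fun _ => (1 : ℝ)) t| / lam)) =
      s.indicator fun _ => φ (1 / lam) := by
    funext t
    by_cases ht : t ∈ s <;> simp [ht, h0]
  rw [hfun, setIntegral_indicator hs, setIntegral_const, smul_eq_mul, mul_comm, measureReal_def]

theorem min_mul_le_luxAvg_indicator (hφ : IsYoung φ) {s : Set (Euc d)} (hs : MeasurableSet s)
    (hsub : s ⊆ ball c r) (hr : 0 < r) :
    min 1 (φ 1) * ((volume s).toReal / (volume (ball c r)).toReal) ≤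
      luxAvg φ (s.indicator fun _ => (1 : ℝ)) c r := by
  have hV : 0 < (volume (ball c r)).toReal :=
    ENNReal.toReal_pos (measure_ball_pos volume c hr).ne' measure_ball_lt_top.ne
  have hratio : (volume s).toReal / (volume (ball c r)).toReal ≤ 1 :=
    div_le_one_of_le₀ (ENNReal.toReal_mono measure_ball_lt_top.ne (measure_mono hsub)) hV.le
  refine le_csInf ⟨_, one_add_mem_luxAvg_set hφ (abs_indicator_one_le_one s)⟩ ?_
  rintro lam ⟨hlam, hint⟩
  rcases le_or_gt 1 lam with h1 | h1
  · calc min 1 (φ 1) * _ ≤ 1 * 1 :=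
          mul_le_mul (min_le_left _ _) hratio (by positivity) zero_le_one
      _ ≤ lam := by linarith
  rw [integral_ball_comp_indicator_one hs hφ.zero, inter_eq_self_of_subset_right hsub] at hint
  have hslope : φ 1 ≤ lam * φ (1 / lam) := by
    simpa [div_div_eq_mul_div, mul_comm] using
      hφ.convex.div_le_div_of_map_zero hφ.zero one_pos ((one_le_div hlam).2 h1.le)
  calc min 1 (φ 1) * _ ≤ φ 1 * (volume s).toReal / (volume (ball c r)).toReal := by
        rw [mul_div_assoc]; gcongr; exact min_le_right _ _
    _ ≤ lam * (φ (1 / lam) * (volume s).toReal) / (volume (ball c r)).toReal := by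
        rw [← mul_assoc]; gcongr
    _ ≤ lam * (volume (ball c r)).toReal / (volume (ball c r)).toReal := by gcongr
    _ = lam := mul_div_cancel_right₀ _ hV.ne'

end LuxemburgAverage

theorem min_one_inv_mul_rpow_le {a s β : ℝ} (ha : 0 < a) (hs : 1 ≤ s) (hβ : 0 ≤ β) :
    min 1 a⁻¹ * s ^ (1 - β) ≤ 1 + (s - 1) / (a * s ^ β) := by
  have hsβ : 1 ≤ s ^ β := Real.one_le_rpow hs hβ
  have hden : 0 < a * s ^ β := by positivity
  have hnum : min a 1 * s ≤ a * s ^ β + (s - 1) := by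
    rcases le_total a 1 with h | h
    · rw [min_eq_left h]; nlinarith
    · rw [min_eq_right h]; nlinarith
  have hlhs : min 1 a⁻¹ * s ^ (1 - β) = min a 1 * s / (a * s ^ β) := by
    rw [eq_div_iff hden.ne']
    calc min 1 a⁻¹ * s ^ (1 - β) * (a * s ^ β) = min 1 a⁻¹ * a * (s ^ (1 - β) * s ^ β) := by ring
      _ = min a 1 * s := by
        rw [min_mul_of_nonneg _ _ ha.le, ← Real.rpow_add (by linarith), inv_mul_cancel₀ ha.ne']
        simp
  rw [hlhs, div_le_iff₀ hden, add_mul, div_mul_cancel₀ _ hden.ne', one_mul]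
  exact hnum

namespace IsCriticalRadius

variable {d : ℕ} {ρ : Euc d → ℝ} {C₀ N₀ : ℝ}

theorem pos (hρ : IsCriticalRadius ρ C₀ N₀) (x : Euc d) : 0 < ρ x := hρ.2.2.1 x

theorem min_mul_rpow_le (hρ : IsCriticalRadius ρ C₀ N₀) {x₀ c : Euc d} {r : ℝ} (hr : 0 ≤ r)
    (hdist : dist x₀ c < r + ρ x₀) :
    min 1 (2 * C₀)⁻¹ * (1 + r / ρ x₀) ^ (1 / (N₀ + 1)) ≤ 1 + r / ρ c := by
  obtain ⟨hC₀, hN₀, hpos, hbound⟩ := hρ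
  set ρ₀ := ρ x₀
  set s := 1 + r / ρ₀
  set β := N₀ / (N₀ + 1)
  have hρ₀ : 0 < ρ₀ := hpos x₀
  have hs : 1 ≤ s := le_add_of_nonneg_right (by positivity)
  have hβ0 : 0 ≤ β := by positivity
  have hβ1 : β ≤ 1 := div_le_one_of_le₀ (by linarith) (by linarith)
  have hnear : 1 + dist x₀ c / ρ₀ ≤ 2 * s := by
    have : dist x₀ c / ρ₀ ≤ r / ρ₀ + 1 := by
      rw [div_add_one hρ₀.ne']; gcongr
    have : 0 ≤ r / ρ₀ := by positivity
    linarith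
  have hρc : ρ c ≤ 2 * C₀ * ρ₀ * s ^ β := calc
    ρ c ≤ C₀ * ρ₀ * (1 + dist x₀ c / ρ₀) ^ β := (hbound x₀ c).2
    _ ≤ C₀ * ρ₀ * (2 * s) ^ β := by gcongr
    _ = C₀ * ρ₀ * (2 ^ β * s ^ β) := by rw [Real.mul_rpow zero_le_two (by linarith)]
    _ ≤ C₀ * ρ₀ * (2 * s ^ β) := by
      gcongr
      simpa using Real.rpow_le_rpow_of_exponent_le one_le_two hβ1
    _ = 2 * C₀ * ρ₀ * s ^ β := by ring
  have hexp : 1 / (N₀ + 1) = 1 - β := by simp only [β]; field_simp; ring_nf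
  calc min 1 (2 * C₀)⁻¹ * s ^ (1 / (N₀ + 1)) ≤ 1 + (s - 1) / (2 * C₀ * s ^ β) := by
        rw [hexp]; exact min_one_inv_mul_rpow_le (by positivity) hs hβ0
    _ = 1 + r / (2 * C₀ * ρ₀ * s ^ β) := by
        congr 1
        rw [add_sub_cancel_left, div_div]
        ring
    _ ≤ 1 + r / ρ c := by gcongr; exact hpos c

theorem rpow_neg_le (hρ : IsCriticalRadius ρ C₀ N₀) {σ : ℝ} (hσ : 0 ≤ σ) {x₀ c : Euc d} {r : ℝ}
    (hr : 0 ≤ r) (hdist : dist x₀ c < r + ρ x₀) :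
    (1 + r / ρ c) ^ (-(σ * (N₀ + 1))) ≤
      (min 1 (2 * C₀)⁻¹) ^ (-(σ * (N₀ + 1))) * (1 + r / ρ x₀) ^ (-σ) := by
  have hC₀ := hρ.1
  have hN₀ : 0 < N₀ + 1 := by linarith [hρ.2.1]
  have hs : 0 < 1 + r / ρ x₀ := by have := hρ.pos x₀; positivity
  calc (1 + r / ρ c) ^ (-(σ * (N₀ + 1)))
      ≤ (min 1 (2 * C₀)⁻¹ * (1 + r / ρ x₀) ^ (1 / (N₀ + 1))) ^ (-(σ * (N₀ + 1))) :=
        Real.rpow_le_rpow_of_nonpos (by positivity) (hρ.min_mul_rpow_le hr hdist)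
          (by simp only [Left.neg_nonpos_iff]; positivity)
    _ = (min 1 (2 * C₀)⁻¹) ^ (-(σ * (N₀ + 1))) * (1 + r / ρ x₀) ^ (-σ) := by
        rw [Real.mul_rpow (by positivity) (by positivity), ← Real.rpow_mul hs.le]
        congr 2
        field_simp

end IsCriticalRadius

theorem one_add_norm_le_mul_of_mem_ball {E : Type*} [SeminormedAddCommGroup E] {x c x₀ : E}
    {r ρ₀ : ℝ} (hρ₀ : 0 < ρ₀) (hx : x ∈ ball c r) (hdist : dist x₀ c < r + ρ₀) :
    1 + ‖x‖ ≤ (1 + ‖x₀‖ + 3 * ρ₀) * (1 + r / ρ₀) := by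
  have hr : 0 ≤ r := dist_nonneg.trans (mem_ball.1 hx).le
  have hxx₀ : ‖x‖ ≤ ‖x₀‖ + (r + (r + ρ₀)) := calc
    ‖x‖ ≤ ‖x₀‖ + dist x x₀ := by rw [dist_eq_norm]; linarith [norm_sub_norm_le x x₀]
    _ ≤ ‖x₀‖ + (dist x c + dist x₀ c) := by gcongr; exact dist_triangle_right _ _ _
    _ ≤ ‖x₀‖ + (r + (r + ρ₀)) := by gcongr; exact (mem_ball.1 hx).le
  have h3r : 3 * r ≤ (1 + ‖x₀‖ + 3 * ρ₀) * (r / ρ₀) := calc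
    3 * r = 3 * ρ₀ * (r / ρ₀) := by field_simp
    _ ≤ (1 + ‖x₀‖ + 3 * ρ₀) * (r / ρ₀) := by gcongr; linarith [norm_nonneg x₀]
  nlinarith

section MaximalFunctionOfIndicator

variable {d : ℕ} {ρ : Euc d → ℝ} {φ : ℝ → ℝ}

theorem orliczMaxTheta_indicator_ball_le {C₀ N₀ : ℝ} (hρ : IsCriticalRadius ρ C₀ N₀)
    (hφ : IsYoung φ) {σ : ℝ} (hσ : 0 ≤ σ) (x₀ : Euc d) :
    ∃ C ≥ 0, ∀ x, orliczMaxTheta ρ (σ * (N₀ + 1)) φ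
      ((ball x₀ (ρ x₀)).indicator fun _ => (1 : ℝ)) x ≤ ENNReal.ofReal (C * (1 + ‖x‖) ^ (-σ)) := by
  set ρ₀ := ρ x₀
  set m := min 1 (2 * C₀)⁻¹
  set D := 1 + ‖x₀‖ + 3 * ρ₀
  have hρ₀ : 0 < ρ₀ := hρ.pos x₀
  have hm : 0 < m := lt_min one_pos (by have := hρ.1; positivity)
  have hD : 0 < D := by positivity
  have hφ1 := hφ.nonneg 1 zero_le_one
  refine ⟨m ^ (-(σ * (N₀ + 1))) * D ^ σ * (1 + φ 1), by positivity, fun x => ?_⟩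
  refine iSup₂_le fun c r => iSup_le fun hx => ENNReal.ofReal_le_ofReal ?_
  rcases (ball c r ∩ ball x₀ ρ₀).eq_empty_or_nonempty with hempty | ⟨z, hzc, hz₀⟩
  · have hzero : EqOn ((ball x₀ ρ₀).indicator fun _ => (1 : ℝ)) 0 (ball c r) := fun t ht =>
      indicator_of_notMem (fun ht₀ => hempty.subset ⟨ht, ht₀⟩) _
    rw [luxAvg_eq_zero_of_eqOn_zero hφ.zero hzero, mul_zero]
    positivity
  have hr : 0 ≤ r := dist_nonneg.trans (mem_ball.1 hx).le
  have hdist : dist x₀ c < r + ρ₀ := by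
    linarith [dist_triangle_left x₀ c z, mem_ball.1 hzc, mem_ball.1 hz₀]
  have hX : 0 < 1 + ‖x‖ := by positivity
  have hdecay : (1 + r / ρ₀) ^ (-σ) ≤ D ^ σ * (1 + ‖x‖) ^ (-σ) := calc
    (1 + r / ρ₀) ^ (-σ) ≤ ((1 + ‖x‖) / D) ^ (-σ) :=
      Real.rpow_le_rpow_of_nonpos (by positivity)
        ((div_le_iff₀' hD).2 (one_add_norm_le_mul_of_mem_ball hρ₀ hx hdist)) (by linarith)
    _ = D ^ σ * (1 + ‖x‖) ^ (-σ) := by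
      rw [Real.div_rpow hX.le hD.le, Real.rpow_neg hD.le, div_inv_eq_mul, mul_comm]
  calc (1 + r / ρ c) ^ (-(σ * (N₀ + 1))) * luxAvg φ ((ball x₀ ρ₀).indicator fun _ => 1) c r
      ≤ (m ^ (-(σ * (N₀ + 1))) * (1 + r / ρ₀) ^ (-σ)) * (1 + φ 1) :=
        mul_le_mul (hρ.rpow_neg_le hσ hr hdist)
          (luxAvg_le_one_add hφ (abs_indicator_one_le_one _)) luxAvg_nonneg (by positivity)
    _ ≤ (m ^ (-(σ * (N₀ + 1))) * (D ^ σ * (1 + ‖x‖) ^ (-σ))) * (1 + φ 1) := by gcongr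
    _ = m ^ (-(σ * (N₀ + 1))) * D ^ σ * (1 + φ 1) * (1 + ‖x‖) ^ (-σ) := by ring

theorem orliczMaxTheta_indicator_ball_ge (hφ : IsYoung φ) (hφ1 : 0 < φ 1) (hρ0 : 0 < ρ 0)
    {θ σ : ℝ} (hθ : 0 ≤ θ) (hσ : θ + d ≤ σ) :
    ∃ c > 0, ∀ x, ENNReal.ofReal (c * (1 + ‖x‖) ^ (-σ)) ≤
      orliczMaxTheta ρ θ φ ((ball 0 (ρ 0)).indicator fun _ => (1 : ℝ)) x := by
  set a := ρ 0
  refine ⟨(2 + 1 / a) ^ (-θ) * min 1 (φ 1) * (a / (a + 1)) ^ d, by positivity, fun x => ?_⟩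
  set X := 1 + ‖x‖
  have hX : 1 ≤ X := le_add_of_nonneg_right (norm_nonneg x)
  have hx : x ∈ ball 0 (a + X) := by rw [mem_ball_zero_iff]; linarith
  have hsub : ball (0 : Euc d) a ⊆ ball 0 (a + X) := ball_subset_ball (by linarith)
  have hlux := min_mul_le_luxAvg_indicator hφ measurableSet_ball hsub (by positivity)
  rw [measure_ball_toReal_div_measure_ball volume _ _ hρ0 (by positivity),
    finrank_euclideanSpace_fin] at hlux
  have hweight : 1 + (a + X) / a ≤ (2 + 1 / a) * X := by
    rw [add_div, div_self hρ0.ne', add_mul, div_mul_eq_mul_div, one_mul]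
    linarith
  have hratio : a / ((a + 1) * X) ≤ a / (a + X) := by
    gcongr
    nlinarith
  have hXpow : X ^ (-(θ + d)) = X ^ (-θ) * (X ^ d)⁻¹ := by
    rw [neg_add, Real.rpow_add (by positivity), Real.rpow_neg (by positivity) (d : ℝ),
      Real.rpow_natCast]
  refine le_iSup₂_of_le 0 (a + X) (le_iSup_of_le hx (ENNReal.ofReal_le_ofReal ?_))
  calc (2 + 1 / a) ^ (-θ) * min 1 (φ 1) * (a / (a + 1)) ^ d * X ^ (-σ)
      ≤ (2 + 1 / a) ^ (-θ) * min 1 (φ 1) * (a / (a + 1)) ^ d * X ^ (-(θ + d)) := by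
        gcongr
    _ = ((2 + 1 / a) * X) ^ (-θ) * (min 1 (φ 1) * (a / ((a + 1) * X)) ^ d) := by
        rw [hXpow, Real.mul_rpow (by positivity) (by positivity), div_pow, div_pow, mul_pow]
        ring
    _ ≤ (1 + (a + X) / a) ^ (-θ) * (min 1 (φ 1) * (a / (a + X)) ^ d) := by
        gcongr ?_ * (_ * ?_)
        · exact Real.rpow_le_rpow_of_nonpos (by positivity) hweight (by linarith)
        · exact pow_le_pow_left₀ (by positivity) hratio d
    _ ≤ (1 + (a + X) / a) ^ (-θ) * luxAvg φ ((ball 0 a).indicator fun _ => 1) 0 (a + X) := by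
        gcongr

end MaximalFunctionOfIndicator

section WeightedIntegrals

variable {α : Type*} [MeasurableSpace α] {μ : Measure α} {g w : α → ℝ} {M : α → ℝ≥0∞}

theorem lintegral_ofReal_mul_lt_top_of_le_ofReal {C : ℝ} (hg : ∀ x, 0 ≤ g x) (hC : 0 ≤ C)
    (hM : ∀ x, M x ≤ ENNReal.ofReal (C * w x))
    (hw : ∫⁻ x, ENNReal.ofReal (g x * w x) ∂μ < ⊤) :
    ∫⁻ x, ENNReal.ofReal (g x) * M x ∂μ < ⊤ := calc
  ∫⁻ x, ENNReal.ofReal (g x) * M x ∂μ ≤ ∫⁻ x, ENNReal.ofReal C * ENNReal.ofReal (g x * w x) ∂μ :=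
    lintegral_mono fun x => calc
      ENNReal.ofReal (g x) * M x ≤ ENNReal.ofReal (g x) * ENNReal.ofReal (C * w x) := by
        gcongr; exact hM x
      _ = ENNReal.ofReal C * ENNReal.ofReal (g x * w x) := by
        rw [← ENNReal.ofReal_mul (hg x), ← ENNReal.ofReal_mul hC]; ring_nf
  _ = ENNReal.ofReal C * ∫⁻ x, ENNReal.ofReal (g x * w x) ∂μ :=
    lintegral_const_mul' _ _ ENNReal.ofReal_ne_top
  _ < ⊤ := ENNReal.mul_lt_top ENNReal.ofReal_lt_top hw

theorem lintegral_ofReal_mul_lt_top_of_ofReal_le {c : ℝ} (hg : ∀ x, 0 ≤ g x) (hc : 0 < c)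
    (hM : ∀ x, ENNReal.ofReal (c * w x) ≤ M x)
    (hgM : ∫⁻ x, ENNReal.ofReal (g x) * M x ∂μ < ⊤) :
    ∫⁻ x, ENNReal.ofReal (g x * w x) ∂μ < ⊤ := by
  have hmul : (∫⁻ x, ENNReal.ofReal (g x * w x) ∂μ) * ENNReal.ofReal c < ⊤ := calc
    (∫⁻ x, ENNReal.ofReal (g x * w x) ∂μ) * ENNReal.ofReal c
        = ∫⁻ x, ENNReal.ofReal (g x) * ENNReal.ofReal (c * w x) ∂μ := by
      rw [← lintegral_mul_const' _ _ ENNReal.ofReal_ne_top]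
      congr 1 with x
      rw [← ENNReal.ofReal_mul' hc.le, ← ENNReal.ofReal_mul (hg x)]; ring_nf
    _ ≤ ∫⁻ x, ENNReal.ofReal (g x) * M x ∂μ := lintegral_mono fun x => by gcongr; exact hM x
    _ < ⊤ := hgM
  exact ENNReal.lt_top_of_mul_ne_top_left hmul.ne (ENNReal.ofReal_pos.2 hc).ne'

end WeightedIntegrals

theorem stmt17_general {d : ℕ} (ρ : Euc d → ℝ) (C₀ N₀ : ℝ)
    (hρ : IsCriticalRadius ρ C₀ N₀) (p : ℝ)
    (φ : ℝ → ℝ) (hφ : IsYoung φ) (hφmono : StrictMonoOn φ (Ici 0))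
    (f : Euc d → ℝ) :
    (∃ θ : ℝ, 0 ≤ θ ∧ ∀ x₀ : Euc d,
      (∫⁻ x, ENNReal.ofReal (|f x| ^ p) *
        orliczMaxTheta ρ θ φ ((ball x₀ (ρ x₀)).indicator fun _ => (1:ℝ)) x) < ⊤) ↔
    (∃ σ > (0:ℝ),
      (∫⁻ x : Euc d, ENNReal.ofReal (|f x| ^ p * (1 + ‖x‖) ^ (-σ))) < ⊤) := by
  have hfp : ∀ x, 0 ≤ |f x| ^ p := fun x => by positivity
  constructor
  · rintro ⟨θ, hθ, hfin⟩
    have hφ1 : 0 < φ 1 := by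
      simpa [hφ.zero] using hφmono (mem_Ici.2 le_rfl) (mem_Ici.2 zero_le_one) one_pos
    obtain ⟨c, hc, hcM⟩ := orliczMaxTheta_indicator_ball_ge (ρ := ρ) hφ hφ1 (hρ.pos 0) hθ
      (le_add_of_nonneg_right zero_le_one)
    exact ⟨θ + d + 1, by positivity, lintegral_ofReal_mul_lt_top_of_ofReal_le hfp hc hcM (hfin 0)⟩
  · rintro ⟨σ, hσ, hfin⟩
    refine ⟨σ * (N₀ + 1), by have := hρ.2.1; positivity, fun x₀ => ?_⟩
    obtain ⟨C, hC, hMC⟩ := orliczMaxTheta_indicator_ball_le hρ hφ hσ.le x₀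
    exact lintegral_ofReal_mul_lt_top_of_le_ofReal hfp hC hMC hfin

/-- Proposition 5.2: for `p ≥ 1` and a Young function `φ` strictly
increasing to infinity, a measurable `f` satisfies
`∫ |f|^p M_φ^θ(χ_{B(x₀,ρ(x₀))}) < ∞` for some `θ ≥ 0` and every `x₀`, if and only if
`∫ |f|^p (1+|x|)^{-σ} dx < ∞` for some `σ > 0`. -/
theorem stmt17 {d : ℕ} (hd : 1 ≤ d) (ρ : Euc d → ℝ) (C₀ N₀ : ℝ)
    (hρ : IsCriticalRadius ρ C₀ N₀) (p : ℝ) (hp : 1 ≤ p)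
    (φ : ℝ → ℝ) (hφ : IsYoung φ) (hφmono : StrictMonoOn φ (Ici 0))
    (hφtop : Filter.Tendsto φ Filter.atTop Filter.atTop)
    (f : Euc d → ℝ) (hf : Measurable f) :
    (∃ θ : ℝ, 0 ≤ θ ∧ ∀ x₀ : Euc d,
      (∫⁻ x, ENNReal.ofReal (|f x| ^ p) *
        orliczMaxTheta ρ θ φ ((ball x₀ (ρ x₀)).indicator fun _ => (1:ℝ)) x) < ⊤) ↔
    (∃ σ > (0:ℝ),
      (∫⁻ x : Euc d, ENNReal.ofReal (|f x| ^ p * (1 + ‖x‖) ^ (-σ))) < ⊤) :=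
  stmt17_general ρ C₀ N₀ hρ p φ hφ hφmono f
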